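/- Let γ ∈ (0,π) and Q(x) = |sech(x sin γ - iγ/2)|. The vector ξ_γ(x) with components ξ₁(x) = e^{(x/2) sin γ}(e^{-2x sin γ} - x sin(2γ)) Q(x) and ξ₂(x) = -e^{-(x/2) sin γ}(e^{2x sin γ} + 2 cos γ + x sin(2γ)) Q(x) satisfies ξ_γ'(x) = M_γ(x) ξ_γ(x) for all x ∈ ℝ, and ξ_γ is unbounded as |x| → ∞. -/

import Mathlib

noncomputable def sech (z : ℂ) : ℂ := (Complex.cosh z)⁻¹

noncomputable def uSol (γ x : ℝ) : ℂ :=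
  Complex.I * Real.sin γ * sech ((x : ℂ) * Real.sin γ - Complex.I * γ / 2)

noncomputable def vSol (γ x : ℝ) : ℂ :=
  -Complex.I * Real.sin γ * sech ((x : ℂ) * Real.sin γ + Complex.I * γ / 2)

noncomputable def Mmat (γ x : ℝ) : Matrix (Fin 2) (Fin 2) ℂ :=
  !![-(Real.sin γ : ℂ) / 2,
     (Complex.I / 2) * (Complex.exp (-Complex.I * γ / 2) * (starRingEnd ℂ) (uSol γ x)
        - Complex.exp (Complex.I * γ / 2) * (starRingEnd ℂ) (vSol γ x));
     (Complex.I / 2) * (Complex.exp (-Complex.I * γ / 2) * uSol γ x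
        - Complex.exp (Complex.I * γ / 2) * vSol γ x),
     (Real.sin γ : ℂ) / 2]

noncomputable def phiVec (γ x : ℝ) : Fin 2 → ℂ :=
  ![((Real.exp (x / 2 * Real.sin γ) *
      ‖sech ((x : ℂ) * Real.sin γ - Complex.I * γ / 2)‖ : ℝ) : ℂ),
    ((Real.exp (-(x / 2) * Real.sin γ) *
      ‖sech ((x : ℂ) * Real.sin γ - Complex.I * γ / 2)‖ : ℝ) : ℂ)]


noncomputable def xiVec (γ x : ℝ) : Fin 2 → ℂ :=
  ![((Real.exp (x / 2 * Real.sin γ) * (Real.exp (-(2 * x) * Real.sin γ) - x * Real.sin (2 * γ)) *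
      ‖sech ((x : ℂ) * Real.sin γ - Complex.I * γ / 2)‖ : ℝ) : ℂ),
    ((-(Real.exp (-(x / 2) * Real.sin γ) *
      (Real.exp (2 * x * Real.sin γ) + 2 * Real.cos γ + x * Real.sin (2 * γ)) *
      ‖sech ((x : ℂ) * Real.sin γ - Complex.I * γ / 2)‖) : ℝ) : ℂ)]

/-!
With `a = x sin γ` and `c = cos γ`, the identity
`cosh (a + iγ/2) cosh (a - iγ/2) = (cosh 2a + c) / 2 =: D` gives `Q = D^{-1/2}` and shows that
`M_γ(x) = sin γ • A(a)` for a real matrix `A`. Hence `ξ_γ(x) = η(x sin γ)` for a real curve `η` with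
`η' = A η`, which becomes a rational identity in `e^{a/2}`. For growth, `D ≤ cosh² a ≤ e^{2a}` gives
`Q ≥ e^{-a}`, so `-ξ₂ ≥ e^{a/2} - 2` once `a ≥ 1`.
-/

open Complex

theorem Complex.cosh_add_mul_cosh_sub (u v : ℂ) :
    cosh (u + v) * cosh (u - v) = (cosh (2 * u) + cosh (2 * v)) / 2 := by
  simp only [Complex.cosh, Complex.exp_add, Complex.exp_sub, Complex.exp_neg, two_mul]
  field_simp
  ring

theorem Complex.exp_neg_mul_cosh_sub_add_exp_mul_cosh_add (u v : ℂ) :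
    exp (-v) * cosh (u - v) + exp v * cosh (u + v) = exp (-u) + cosh (2 * v) * exp u := by
  simp only [Complex.cosh, Complex.exp_add, Complex.exp_sub, Complex.exp_neg, two_mul]
  field_simp
  ring

noncomputable def normSqCosh (c a : ℝ) : ℝ := (Real.cosh (2 * a) + c) / 2

theorem normSqCosh_pos {c : ℝ} (hc : -1 < c) (a : ℝ) : 0 < normSqCosh c a := by
  have := Real.one_le_cosh (2 * a)
  unfold normSqCosh
  linarith

theorem cosh_two_mul_I_mul_div_two (γ : ℝ) : cosh (2 * (I * γ / 2)) = Real.cos γ := by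
  rw [show 2 * (I * γ / 2) = γ * I by ring, cosh_mul_I, ofReal_cos]

theorem conj_cosh_sub_I_mul_div_two (a γ : ℝ) :
    (starRingEnd ℂ) (cosh (a - I * γ / 2)) = cosh (a + I * γ / 2) := by
  rw [← cosh_conj]
  simp only [map_sub, map_mul, map_div₀, conj_I, conj_ofReal, map_ofNat]
  ring_nf

theorem conj_cosh_add_I_mul_div_two (a γ : ℝ) :
    (starRingEnd ℂ) (cosh (a + I * γ / 2)) = cosh (a - I * γ / 2) := by
  rw [← conj_cosh_sub_I_mul_div_two, Complex.conj_conj]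

theorem cosh_add_mul_cosh_sub_I_mul_div_two (a γ : ℝ) :
    cosh (a + I * γ / 2) * cosh (a - I * γ / 2) = normSqCosh (Real.cos γ) a := by
  rw [cosh_add_mul_cosh_sub, cosh_two_mul_I_mul_div_two, normSqCosh]
  push_cast
  rfl

theorem norm_sech_sub_I_mul_div_two (a γ : ℝ) :
    ‖sech (a - I * γ / 2)‖ = (√(normSqCosh (Real.cos γ) a))⁻¹ := by
  have h : (normSq (cosh (a - I * γ / 2)) : ℂ) = normSqCosh (Real.cos γ) a := by
    rw [← mul_conj, conj_cosh_sub_I_mul_div_two, mul_comm, cosh_add_mul_cosh_sub_I_mul_div_two]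
  rw [sech, norm_inv, norm_def, ofReal_inj.1 h]

theorem cosh_sub_I_mul_div_two_ne_zero {γ : ℝ} (hγ : -1 < Real.cos γ) (a : ℝ) :
    cosh (a - I * γ / 2) ≠ 0 :=
  right_ne_zero_of_mul <| by
    rw [cosh_add_mul_cosh_sub_I_mul_div_two]; exact_mod_cast (normSqCosh_pos hγ a).ne'

theorem cosh_add_I_mul_div_two_ne_zero {γ : ℝ} (hγ : -1 < Real.cos γ) (a : ℝ) :
    cosh (a + I * γ / 2) ≠ 0 :=
  left_ne_zero_of_mul <| by
    rw [cosh_add_mul_cosh_sub_I_mul_div_two]; exact_mod_cast (normSqCosh_pos hγ a).ne'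

theorem exp_mul_cosh_sub_add_exp_mul_cosh_add_I (a γ : ℝ) :
    exp (-I * γ / 2) * cosh (a - I * γ / 2) + exp (I * γ / 2) * cosh (a + I * γ / 2) =
      (Real.exp (-a) + Real.cos γ * Real.exp a : ℝ) := by
  rw [neg_mul, neg_div, exp_neg_mul_cosh_sub_add_exp_mul_cosh_add, cosh_two_mul_I_mul_div_two]
  push_cast
  rfl

theorem exp_mul_cosh_add_add_exp_mul_cosh_sub_I (a γ : ℝ) :
    exp (-I * γ / 2) * cosh (a + I * γ / 2) + exp (I * γ / 2) * cosh (a - I * γ / 2) =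
      (Real.exp a + Real.cos γ * Real.exp (-a) : ℝ) := by
  have h := exp_mul_cosh_sub_add_exp_mul_cosh_add_I (-a) γ
  rw [neg_neg, ofReal_neg, ← cosh_neg, ← cosh_neg (-↑a + _)] at h
  rw [← h]
  ring_nf

theorem uSol_eq (γ x : ℝ) :
    uSol γ x = I * Real.sin γ * (cosh (((x * Real.sin γ : ℝ) : ℂ) - I * γ / 2))⁻¹ := by
  rw [uSol, sech, ofReal_mul]

theorem vSol_eq (γ x : ℝ) :
    vSol γ x = -I * Real.sin γ * (cosh (((x * Real.sin γ : ℝ) : ℂ) + I * γ / 2))⁻¹ := by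
  rw [vSol, sech, ofReal_mul]

noncomputable def coeffMatrix (c a : ℝ) : Matrix (Fin 2) (Fin 2) ℝ :=
  !![-1 / 2, (Real.exp (-a) + c * Real.exp a) / (2 * normSqCosh c a);
     -((Real.exp a + c * Real.exp (-a)) / (2 * normSqCosh c a)), 1 / 2]

theorem Mmat_eq {γ : ℝ} (hγ : -1 < Real.cos γ) (x : ℝ) :
    Mmat γ x = (Real.sin γ • coeffMatrix (Real.cos γ) (x * Real.sin γ)).map Complex.ofRealHom := by
  have hm := cosh_sub_I_mul_div_two_ne_zero hγ (x * Real.sin γ)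
  have hp := cosh_add_I_mul_div_two_ne_zero hγ (x * Real.sin γ)
  ext i j
  fin_cases i <;> fin_cases j <;>
    simp only [Mmat, uSol_eq, vSol_eq, coeffMatrix, Fin.zero_eta, Fin.mk_one, Matrix.of_apply,
      Matrix.cons_val', Matrix.cons_val_zero, Matrix.cons_val_one, Matrix.empty_val',
      Matrix.cons_val_fin_one, Matrix.map_apply, Matrix.smul_apply, smul_eq_mul, ofRealHom_eq_coe,
      map_mul, map_neg, map_inv₀, conj_I, conj_ofReal, conj_cosh_sub_I_mul_div_two,
      conj_cosh_add_I_mul_div_two]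
  · push_cast; ring
  · rw [ofReal_div, ofReal_mul 2, ofReal_ofNat, ← exp_mul_cosh_sub_add_exp_mul_cosh_add_I,
      ← cosh_add_mul_cosh_sub_I_mul_div_two]
    generalize cosh (((x * Real.sin γ : ℝ) : ℂ) - I * γ / 2) = Cm at hm ⊢
    generalize cosh (((x * Real.sin γ : ℝ) : ℂ) + I * γ / 2) = Cp at hp ⊢
    field_simp
    rw [I_sq]
    ring
  · rw [ofReal_div, ofReal_mul 2, ofReal_ofNat, ← exp_mul_cosh_add_add_exp_mul_cosh_sub_I,
      ← cosh_add_mul_cosh_sub_I_mul_div_two]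
    generalize cosh (((x * Real.sin γ : ℝ) : ℂ) - I * γ / 2) = Cm at hm ⊢
    generalize cosh (((x * Real.sin γ : ℝ) : ℂ) + I * γ / 2) = Cp at hp ⊢
    field_simp
    rw [I_sq]
    ring
  · push_cast; ring

theorem hasDerivAt_normSqCosh (c a : ℝ) : HasDerivAt (normSqCosh c) (Real.sinh (2 * a)) a := by
  refine ((((hasDerivAt_id a).const_mul 2).cosh.add_const c).div_const 2).congr_deriv ?_
  simp

theorem hasDerivAt_inv_sqrt_normSqCosh {c : ℝ} (hc : -1 < c) (a : ℝ) :
    HasDerivAt (fun a => (√(normSqCosh c a))⁻¹)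
      (-(Real.sinh (2 * a) / (2 * normSqCosh c a)) * (√(normSqCosh c a))⁻¹) a := by
  have hD := normSqCosh_pos hc a
  have hr : √(normSqCosh c a) ≠ 0 := (Real.sqrt_pos.2 hD).ne'
  refine (((hasDerivAt_normSqCosh c a).sqrt hD.ne').inv hr).congr_deriv ?_
  rw [Real.sq_sqrt hD.le]
  field_simp

noncomputable def xiReal (c a : ℝ) : Fin 2 → ℝ :=
  ![Real.exp (a / 2) * (Real.exp (-(2 * a)) - 2 * c * a) * (√(normSqCosh c a))⁻¹,
    -(Real.exp (-(a / 2)) * (Real.exp (2 * a) + 2 * c + 2 * c * a) * (√(normSqCosh c a))⁻¹)]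

theorem hasDerivAt_xiReal {c : ℝ} (hc : -1 < c) (a : ℝ) :
    HasDerivAt (xiReal c) ((coeffMatrix c a).mulVec (xiReal c a)) a := by
  have hQ := hasDerivAt_inv_sqrt_normSqCosh hc a
  have hhalf : HasDerivAt (fun a : ℝ => a / 2) (1 / 2) a := (hasDerivAt_id a).div_const 2
  have htwo : HasDerivAt (fun a : ℝ => 2 * a) 2 a := by
    simpa using (hasDerivAt_id a).const_mul 2
  have hlin : HasDerivAt (fun a : ℝ => 2 * c * a) (2 * c) a := by
    simpa using (hasDerivAt_id a).const_mul (2 * c)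
  set E := Real.exp (a / 2) with hE
  have hE0 : E ≠ 0 := (Real.exp_pos _).ne'
  have hE2 : Real.exp a = E ^ 2 := by rw [← Real.exp_nat_mul]; ring_nf
  have hE2' : Real.exp (-a) = (E ^ 2)⁻¹ := by rw [Real.exp_neg, hE2]
  have hE4 : Real.exp (2 * a) = E ^ 4 := by rw [← Real.exp_nat_mul]; ring_nf
  have hE4' : Real.exp (-(2 * a)) = (E ^ 4)⁻¹ := by rw [Real.exp_neg, hE4]
  have hEinv : Real.exp (-(a / 2)) = E⁻¹ := Real.exp_neg _
  have hsinh : Real.sinh (2 * a) = (E ^ 4 - (E ^ 4)⁻¹) / 2 := by rw [Real.sinh_eq, hE4, hE4']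
  have hcosh : Real.cosh (2 * a) = (E ^ 4 + (E ^ 4)⁻¹) / 2 := by rw [Real.cosh_eq, hE4, hE4']
  -- `4 E⁴ D`, in the form in which `field_simp` meets it
  have hden : E ^ 8 + 1 + E ^ 4 * 2 * c ≠ 0 := by
    nlinarith [sq_nonneg (E ^ 4 - 1), mul_pos (by linarith : 0 < c + 1) (by positivity : 0 < E ^ 4)]
  refine hasDerivAt_pi.2 (Fin.forall_fin_two.2
    ⟨((hhalf.exp.mul (htwo.neg.exp.sub hlin)).mul hQ).congr_deriv ?_,
      ((hhalf.neg.exp.mul ((htwo.exp.add_const (2 * c)).add hlin)).mul hQ).neg.congr_deriv ?_⟩)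
  all_goals
    simp only [Matrix.mulVec, dotProduct, Fin.sum_univ_two, coeffMatrix, xiReal, Matrix.of_apply,
      Matrix.cons_val', Matrix.cons_val_zero, Matrix.cons_val_one, Matrix.empty_val',
      Matrix.cons_val_fin_one, Pi.mul_apply, Pi.sub_apply, Pi.add_apply, Pi.neg_apply]
    generalize (√(normSqCosh c a))⁻¹ = Q
    simp only [normSqCosh, hcosh, hsinh, hE2, hE2', hE4, hE4', hEinv, ← hE]
    field_simp [hden]
    ring

theorem xiVec_eq (γ x : ℝ) : xiVec γ x = fun i => (xiReal (Real.cos γ) (x * Real.sin γ) i : ℂ) := by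
  have hx : (x : ℂ) * (Real.sin γ : ℂ) = ((x * Real.sin γ : ℝ) : ℂ) := (ofReal_mul _ _).symm
  ext i
  fin_cases i <;>
  · simp only [xiVec, xiReal, hx, norm_sech_sub_I_mul_div_two, Real.sin_two_mul, Fin.zero_eta,
      Fin.mk_one, Matrix.cons_val_zero, Matrix.cons_val_one]
    ring_nf

theorem HasDerivAt.ofReal_comp_pi {ι : Type*} [Fintype ι] {f : ℝ → ι → ℝ} {f' : ι → ℝ} {x : ℝ}
    (hf : HasDerivAt f f' x) : HasDerivAt (fun y i => (f y i : ℂ)) (fun i => (f' i : ℂ)) x :=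
  hasDerivAt_pi.2 fun i => (hasDerivAt_pi.1 hf i).ofReal_comp

theorem hasDerivAt_xiVec {γ : ℝ} (hγ : -1 < Real.cos γ) (x : ℝ) :
    HasDerivAt (fun y => xiVec γ y) ((Mmat γ x).mulVec (xiVec γ x)) x := by
  have h := ((hasDerivAt_xiReal hγ (x * Real.sin γ)).scomp x
    (hasDerivAt_mul_const (Real.sin γ))).ofReal_comp_pi
  simp only [funext (xiVec_eq γ), Mmat_eq hγ]
  refine h.congr_deriv (funext fun i => ?_)
  rw [← Matrix.smul_mulVec]
  exact RingHom.map_mulVec Complex.ofRealHom _ _ i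

theorem exp_half_sub_two_le_neg_xiReal_one {c : ℝ} (hc : c ∈ Set.Ioc (-1) 1) {a : ℝ} (ha : 1 ≤ a) :
    Real.exp (a / 2) - 2 ≤ -xiReal c a 1 := by
  have hQ : Real.exp (-a) ≤ (√(normSqCosh c a))⁻¹ := by
    rw [Real.exp_neg]
    refine inv_anti₀ (Real.sqrt_pos.2 (normSqCosh_pos hc.1 a))
      (Real.sqrt_le_iff.2 ⟨(Real.exp_pos a).le, ?_⟩)
    have hcosh : Real.cosh a ≤ Real.exp a := by
      rw [Real.cosh_eq]
      linarith [Real.exp_le_exp.2 (by linarith : -a ≤ a)]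
    unfold normSqCosh
    nlinarith [hc.2, Real.cosh_pos a, Real.cosh_two_mul a, Real.cosh_sq a]
  have hX : Real.exp (2 * a) - 2 - 2 * a ≤ Real.exp (2 * a) + 2 * c + 2 * c * a := by
    nlinarith [hc.1]
  have hX0 : 0 ≤ Real.exp (2 * a) - 2 - 2 * a := by
    nlinarith [Real.quadratic_le_exp_of_nonneg (by linarith : (0 : ℝ) ≤ 2 * a)]
  calc Real.exp (a / 2) - 2
      ≤ Real.exp (a / 2) - (2 + 2 * a) * Real.exp (-(3 * a / 2)) := by
        have h := Real.add_one_le_exp (3 * a / 2)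
        have : (2 + 2 * a) * (Real.exp (3 * a / 2))⁻¹ ≤ 2 := by
          rw [mul_inv_le_iff₀ (Real.exp_pos _)]
          linarith
        rw [Real.exp_neg]
        linarith
    _ = Real.exp (-(a / 2)) * (Real.exp (2 * a) - 2 - 2 * a) * Real.exp (-a) := by
        have e1 : Real.exp (-(a / 2)) * Real.exp (2 * a) * Real.exp (-a) = Real.exp (a / 2) := by
          rw [← Real.exp_add, ← Real.exp_add]; ring_nf
        have e2 : Real.exp (-(a / 2)) * Real.exp (-a) = Real.exp (-(3 * a / 2)) := by
          rw [← Real.exp_add]; ring_nf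
        linear_combination -e1 + (2 + 2 * a) * e2
    _ ≤ Real.exp (-(a / 2)) * (Real.exp (2 * a) + 2 * c + 2 * c * a) * (√(normSqCosh c a))⁻¹ := by
        gcongr
        exact mul_nonneg (Real.exp_pos _).le (hX0.trans hX)
    _ = -xiReal c a 1 := by simp [xiReal]

theorem tendsto_neg_xiReal_one_atTop {c : ℝ} (hc : c ∈ Set.Ioc (-1) 1) :
    Filter.Tendsto (fun a => -xiReal c a 1) Filter.atTop Filter.atTop :=
  Filter.tendsto_atTop_mono' _
    ((Filter.eventually_ge_atTop 1).mono fun _ ha => exp_half_sub_two_le_neg_xiReal_one hc ha)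
    (Filter.tendsto_atTop_add_const_right _ _
      (Real.tendsto_exp_atTop.comp (Filter.tendsto_id.atTop_div_const two_pos)))

theorem cos_mem_Ioc_of_mem_Ioo {γ : ℝ} (hγ : γ ∈ Set.Ioo 0 Real.pi) : Real.cos γ ∈ Set.Ioc (-1) 1 :=
  ⟨by simpa using Real.cos_lt_cos_of_nonneg_of_le_pi hγ.1.le le_rfl hγ.2, Real.cos_le_one γ⟩

theorem tendsto_norm_xiVec_atTop {γ : ℝ} (hγ : γ ∈ Set.Ioo 0 Real.pi) :
    Filter.Tendsto (fun x => ‖xiVec γ x‖) Filter.atTop Filter.atTop := by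
  refine Filter.tendsto_atTop_mono (fun x => ?_)
    ((tendsto_neg_xiReal_one_atTop (cos_mem_Ioc_of_mem_Ioo hγ)).comp
      (Filter.tendsto_id.atTop_mul_const (Real.sin_pos_of_pos_of_lt_pi hγ.1 hγ.2)))
  calc -xiReal (Real.cos γ) (x * Real.sin γ) 1 ≤ ‖xiVec γ x 1‖ := by
        rw [xiVec_eq, Complex.norm_real, Real.norm_eq_abs]
        exact neg_le_abs _
    _ ≤ ‖xiVec γ x‖ := norm_le_pi_norm _ 1

/-- The second solution ξ_γ of the linear equation, which is unbounded. -/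
theorem xiVec_hasDerivAt_and_unbounded (γ : ℝ) (hγ : γ ∈ Set.Ioo 0 Real.pi) :
    (∀ x : ℝ, HasDerivAt (fun y : ℝ => xiVec γ y) ((Mmat γ x).mulVec (xiVec γ x)) x) ∧
    (∀ C : ℝ, ∃ x : ℝ, C < ‖xiVec γ x‖) :=
  ⟨hasDerivAt_xiVec (cos_mem_Ioc_of_mem_Ioo hγ).1,
    fun C => ((tendsto_norm_xiVec_atTop hγ).eventually_gt_atTop C).exists⟩
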